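/- arXiv:1903.10241 — 5 statements merged into one kernel-verified Lean document; each statement's English description precedes it below -/
import Mathlib

section
/- For any density matrix σ_{AB} on a bipartite finite-dimensional system A⊗B, the ranks of the reduced states satisfy rank(σ_{AB})·rank(σ_B) ≥ rank(σ_A). -/
open Matrix
open scoped ComplexOrder

/-- Partial trace over the second factor `B`. -/
noncomputable def ptraceB {A B : Type*} [Fintype A] [Fintype B]
    (σ : Matrix (A × B) (A × B) ℂ) : Matrix A A ℂ :=
  Matrix.of fun a a' => ∑ b, σ (a, b) (a', b)

/-- Partial trace over the first factor `A`. -/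
noncomputable def ptraceA {A B : Type*} [Fintype A] [Fintype B]
    (σ : Matrix (A × B) (A × B) ℂ) : Matrix B B ℂ :=
  Matrix.of fun b b' => ∑ a, σ (a, b) (a, b')

/-!
Conjugating `σ` by `1 ⊗ V`, where the unitary `V` diagonalizes `σ_B`, leaves `σ_A` unchanged,
does not increase `rank σ`, and makes `σ_B` diagonal. Now `σ_A` is the sum over `b` of the
diagonal blocks `σ_{(·,b),(·,b)}`. Each block is positive semidefinite with trace `(σ_B)_{bb}`,
so only the `rank σ_B` blocks belonging to nonzero eigenvalues survive, and each of them has rank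
at most `rank σ`.
-/

open scoped Kronecker

namespace Matrix

variable {m n K : Type*} [Fintype n] [Field K]

theorem rank_add_le (M N : Matrix m n K) : (M + N).rank ≤ M.rank + N.rank := by
  rw [rank, rank, rank, mulVecLin_add]
  exact (Submodule.finrank_mono (LinearMap.range_add_le _ _)).trans
    (Submodule.finrank_add_le_finrank_add_finrank _ _)

theorem rank_sum_le {ι : Type*} (s : Finset ι) (M : ι → Matrix m n K) :
    (∑ i ∈ s, M i).rank ≤ ∑ i ∈ s, (M i).rank :=
  Finset.sum_hom_rel (r := fun N k => rank N ≤ k) (by rw [rank_zero])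
    fun _ _ _ h => (rank_add_le _ _).trans (by gcongr)

end Matrix

section PartialTrace

variable {A B C : Type*} [Fintype A] [Fintype B] [Fintype C]

theorem conjTranspose_ptraceA (σ : Matrix (A × B) (A × B) ℂ) :
    (ptraceA σ)ᴴ = ptraceA σᴴ := by
  ext b b'
  simp [ptraceA, conjTranspose_apply]

theorem ptraceB_eq_sum_submatrix (σ : Matrix (A × B) (A × B) ℂ) :
    ptraceB σ = ∑ b, σ.submatrix (·, b) (·, b) := by
  ext a a'
  simp [ptraceB, Matrix.sum_apply]

theorem trace_submatrix_eq_ptraceA (σ : Matrix (A × B) (A × B) ℂ) (b : B) :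
    (σ.submatrix (·, b) (·, b)).trace = ptraceA σ b b := by
  simp [Matrix.trace, ptraceA]

variable [DecidableEq A]

theorem ptraceB_mul_one_kronecker_comm (M : Matrix (A × B) (A × C) ℂ) (Y : Matrix C B ℂ) :
    ptraceB (M * ((1 : Matrix A A ℂ) ⊗ₖ Y)) = ptraceB (((1 : Matrix A A ℂ) ⊗ₖ Y) * M) := by
  ext a a'
  simp only [ptraceB, Matrix.mul_apply, kroneckerMap_apply, one_apply, ite_mul, one_mul, zero_mul,
    mul_ite, mul_zero, Fintype.sum_prod_type, Finset.sum_ite_irrel, Finset.sum_const_zero,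
    Finset.sum_ite_eq', Finset.mem_univ, ↓reduceIte, of_apply, Finset.sum_ite_eq]
  rw [Finset.sum_comm]
  simp only [mul_comm]

theorem ptraceB_one_kronecker_mul_mul_one_kronecker [DecidableEq B] {X : Matrix C B ℂ}
    {Y : Matrix B C ℂ} (h : Y * X = 1) (σ : Matrix (A × B) (A × B) ℂ) :
    ptraceB (((1 : Matrix A A ℂ) ⊗ₖ X) * σ * ((1 : Matrix A A ℂ) ⊗ₖ Y)) = ptraceB σ := by
  rw [ptraceB_mul_one_kronecker_comm, ← Matrix.mul_assoc, ← mul_kronecker_mul, Matrix.one_mul, h,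
    one_kronecker_one, Matrix.one_mul]

theorem ptraceA_one_kronecker_mul_mul_one_kronecker (X : Matrix C B ℂ) (Y : Matrix B C ℂ)
    (σ : Matrix (A × B) (A × B) ℂ) :
    ptraceA (((1 : Matrix A A ℂ) ⊗ₖ X) * σ * ((1 : Matrix A A ℂ) ⊗ₖ Y)) = X * ptraceA σ * Y := by
  ext c c'
  simp only [ptraceA, Matrix.mul_apply, kroneckerMap_apply, one_apply, ite_mul, one_mul, zero_mul,
    Fintype.sum_prod_type, Finset.sum_ite_irrel, Finset.sum_const_zero, Finset.sum_ite_eq,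
    Finset.mem_univ, ↓reduceIte, mul_ite, Finset.sum_mul, mul_zero, Finset.sum_ite_eq', of_apply,
    Finset.mul_sum]
  rw [Finset.sum_comm]
  exact Finset.sum_congr rfl fun _ _ => Finset.sum_comm

end PartialTrace

open Finset

theorem rank_ptraceB_le_card_mul_rank {A B : Type*} [Fintype A] [Fintype B]
    {σ : Matrix (A × B) (A × B) ℂ} (hσ : σ.PosSemidef) :
    (ptraceB σ).rank ≤ #{b | ptraceA σ b b ≠ 0} * σ.rank := by
  set S : Finset B := {b | ptraceA σ b b ≠ 0}
  have block_eq_zero : ∀ b ∉ S, σ.submatrix (·, b) (·, b) = 0 := fun b hb =>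
    (hσ.submatrix _).trace_eq_zero_iff.mp (by simpa [S, trace_submatrix_eq_ptraceA] using hb)
  calc (ptraceB σ).rank = (∑ b ∈ S, σ.submatrix (·, b) (·, b)).rank := by
        rw [ptraceB_eq_sum_submatrix, sum_subset (subset_univ S) fun b _ => block_eq_zero b]
    _ ≤ ∑ b ∈ S, (σ.submatrix (·, b) (·, b)).rank := rank_sum_le _ _
    _ ≤ ∑ _b ∈ S, σ.rank := sum_le_sum fun b _ => rank_submatrix_le _ _ _
    _ = #S * σ.rank := by rw [sum_const, smul_eq_mul]

theorem rank_reduced_le_rank_mul_rank_general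
    {A B : Type*} [Fintype A] [Fintype B]
    (σ : Matrix (A × B) (A × B) ℂ) (hσ : σ.PosSemidef) :
    (ptraceB σ).rank ≤ σ.rank * (ptraceA σ).rank := by
  classical
  have hσB : (ptraceA σ).IsHermitian := by
    rw [IsHermitian, conjTranspose_ptraceA, hσ.isHermitian.eq]
  set U := hσB.eigenvectorUnitary
  set τ := ((1 : Matrix A A ℂ) ⊗ₖ star (U : Matrix B B ℂ)) * σ * ((1 : Matrix A A ℂ) ⊗ₖ ↑U)
  have hτ : τ.PosSemidef := by
    have := hσ.conjTranspose_mul_mul_same ((1 : Matrix A A ℂ) ⊗ₖ (U : Matrix B B ℂ))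
    rwa [conjTranspose_kronecker, conjTranspose_one, ← star_eq_conjTranspose] at this
  have ptraceB_τ : ptraceB τ = ptraceB σ :=
    ptraceB_one_kronecker_mul_mul_one_kronecker (Unitary.coe_mul_star_self _) σ
  have ptraceA_τ : ptraceA τ = diagonal (RCLike.ofReal ∘ hσB.eigenvalues) := by
    rw [ptraceA_one_kronecker_mul_mul_one_kronecker, ← Unitary.conjStarAlgAut_star_apply (S := ℂ),
      hσB.conjStarAlgAut_star_eigenvectorUnitary]
  have card_eq_rank : #{b | ptraceA τ b b ≠ 0} = (ptraceA σ).rank := by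
    rw [hσB.rank_eq_card_non_zero_eigs, ptraceA_τ, Fintype.card_subtype]
    simp
  calc (ptraceB σ).rank = (ptraceB τ).rank := by rw [ptraceB_τ]
    _ ≤ #{b | ptraceA τ b b ≠ 0} * τ.rank := rank_ptraceB_le_card_mul_rank hτ
    _ ≤ (ptraceA σ).rank * σ.rank := by
        rw [card_eq_rank]
        exact Nat.mul_le_mul_left _ ((rank_mul_le_left _ _).trans (rank_mul_le_right _ _))
    _ = σ.rank * (ptraceA σ).rank := mul_comm _ _

/-- For any density matrix `σ` on `A ⊗ B`, `rank(σ_A) ≤ rank(σ_AB) · rank(σ_B)`. -/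
theorem rank_reduced_le_rank_mul_rank
    {A B : Type*} [Fintype A] [Fintype B] [DecidableEq A] [DecidableEq B]
    (σ : Matrix (A × B) (A × B) ℂ) (hσ : σ.PosSemidef) (htr : σ.trace = 1) :
    (ptraceB σ).rank ≤ σ.rank * (ptraceA σ).rank :=
  rank_reduced_le_rank_mul_rank_general σ hσ
end

section
/- Given density matrices τ_A on system A and τ_B on system B (finite-dimensional), there exists a density matrix σ_{AB} on A⊗B such that Tr_B(σ_{AB}) = τ_A, Tr_A(σ_{AB}) = τ_B, and rank(σ_{AB}) ≤ max(rank(τ_A), rank(τ_B)). -/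
open Matrix
open scoped ComplexOrder

/-!
Diagonalise `τ_A = ∑ᵢ pᵢ uᵢuᵢᴴ` over its `r_A` nonzero eigenvalues and `τ_B = ∑ⱼ qⱼ vⱼvⱼᴴ` over
its `r_B` nonzero eigenvalues, say `r_A ≤ r_B`. The columns `uᵢ`, `vⱼ` form isometries `X`, `Y`, and
partial traces commute with conjugation by `X ⊗ Y`, so it suffices to couple the diagonal states
`diag p` and `diag q`. Index the support of `q` by the cyclic group `ℤ/r_B` and embed that of `p`
into it; then `σ = ∑ₖ wₖwₖᴴ` with `wₖ = ∑ᵢ √(pᵢ q_{i+k}) eᵢ ⊗ e_{i+k}` has marginals `diag p` and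
`diag q` and is a sum of `r_B` rank-one matrices.
-/

open scoped Kronecker

section

variable {A B S T : Type*} [Fintype A] [Fintype B] [Fintype S] [Fintype T]

lemma ptraceA_eq_ptraceB_submatrix_swap (σ : Matrix (A × B) (A × B) ℂ) :
    ptraceA σ = ptraceB (σ.submatrix Prod.swap Prod.swap) :=
  rfl

lemma trace_ptraceB (σ : Matrix (A × B) (A × B) ℂ) : (ptraceB σ).trace = σ.trace := by
  simp [ptraceB, trace, Fintype.sum_prod_type]

lemma ptraceB_kronecker_mul_mul_conjTranspose [DecidableEq T] (X : Matrix A S ℂ)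
    {Y : Matrix B T ℂ} (hY : Yᴴ * Y = 1) (σ : Matrix (S × T) (S × T) ℂ) :
    ptraceB ((X ⊗ₖ Y) * σ * (X ⊗ₖ Y)ᴴ) = X * ptraceB σ * Xᴴ := by
  ext a a'
  have hY' : ∀ t t', ∑ b, star (Y b t') * Y b t = if t' = t then 1 else 0 := fun t t' => by
    simpa [mul_apply, one_apply] using congr_fun (congr_fun hY t') t
  calc ∑ b, ((X ⊗ₖ Y) * σ * (X ⊗ₖ Y)ᴴ) (a, b) (a', b)
      = ∑ y : S × T, ∑ x : S × T, X a x.1 * σ x y * star (X a' y.1) *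
          ∑ b, star (Y b y.2) * Y b x.2 := by
        simp only [mul_apply, conjTranspose_apply, kroneckerMap_apply, star_mul', Finset.sum_mul,
          Finset.mul_sum]
        rw [Finset.sum_comm]
        refine Finset.sum_congr rfl fun y _ => ?_
        rw [Finset.sum_comm]
        exact Finset.sum_congr rfl fun x _ => Finset.sum_congr rfl fun b _ => by ring
    _ = (X * ptraceB σ * Xᴴ) a a' := by
        simp only [hY', mul_ite, mul_one, mul_zero, Fintype.sum_prod_type, Finset.sum_ite_eq,
          Finset.mem_univ, if_true, mul_apply, ptraceB, of_apply, conjTranspose_apply,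
          Finset.sum_mul, Finset.mul_sum]
        exact Finset.sum_congr rfl fun _ _ => Finset.sum_comm

lemma ptraceA_kronecker_mul_mul_conjTranspose [DecidableEq S] {X : Matrix A S ℂ}
    (hX : Xᴴ * X = 1) (Y : Matrix B T ℂ) (σ : Matrix (S × T) (S × T) ℂ) :
    ptraceA ((X ⊗ₖ Y) * σ * (X ⊗ₖ Y)ᴴ) = Y * ptraceA σ * Yᴴ := by
  have hswap : (X ⊗ₖ Y).submatrix Prod.swap Prod.swap = Y ⊗ₖ X := by
    ext ⟨b, a⟩ ⟨t, s⟩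
    simp [mul_comm]
  rw [ptraceA_eq_ptraceB_submatrix_swap, ptraceA_eq_ptraceB_submatrix_swap,
    ← ptraceB_kronecker_mul_mul_conjTranspose Y hX, ← hswap]
  simp only [← Equiv.coe_prodComm, submatrix_mul_equiv]
  rw [conjTranspose_submatrix, submatrix_mul_equiv]

lemma trace_mul_diagonal_mul_conjTranspose [DecidableEq S] {X : Matrix A S ℂ} (hX : Xᴴ * X = 1)
    (d : S → ℂ) : (X * diagonal d * Xᴴ).trace = ∑ k, d k := by
  rw [trace_mul_cycle, hX, one_mul, trace_diagonal]

end

lemma Matrix.PosSemidef.exists_isometry_diagonal_eq {A : Type*} [Fintype A] [DecidableEq A]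
    {τ : Matrix A A ℂ} (hτ : τ.PosSemidef) :
    ∃ (X : Matrix A (Fin τ.rank) ℂ) (p : Fin τ.rank → ℝ), Xᴴ * X = 1 ∧ (∀ k, 0 ≤ p k) ∧
      τ = X * diagonal (fun k => (p k : ℂ)) * Xᴴ := by
  set U : Matrix A A ℂ := ↑hτ.1.eigenvectorUnitary
  set ev := hτ.1.eigenvalues
  let e : Fin τ.rank ≃ {i // ev i ≠ 0} :=
    (Fintype.equivFinOfCardEq hτ.1.rank_eq_card_non_zero_eigs.symm).symm
  let f : Fin τ.rank → A := fun k => (e k).1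
  have hf : Function.Injective f := Subtype.val_injective.comp e.injective
  refine ⟨U.submatrix id f, ev ∘ f, ?_, fun k => hτ.eigenvalues_nonneg _, ?_⟩
  · rw [conjTranspose_submatrix, ← submatrix_mul _ _ _ _ _ Function.bijective_id,
      ← star_eq_conjTranspose, Unitary.coe_star_mul_self, submatrix_one _ hf]
  · conv_lhs => rw [hτ.1.spectral_theorem, Unitary.conjStarAlgAut_apply]
    ext a a'
    simp only [mul_apply, diagonal_apply, mul_ite, mul_zero, Finset.sum_ite_eq', Finset.mem_univ,
      if_true, submatrix_apply, id, conjTranspose_apply, star_apply, Function.comp_apply]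
    refine (Fintype.sum_of_injective f hf _ _ (fun i hi => ?_) fun _ => rfl).symm
    have hev : ev i = 0 := not_not.mp fun h => hi ⟨e.symm ⟨i, h⟩, by simp [f]⟩
    simp [hev, ev]

lemma Complex.ofReal_sqrt_mul_self {a : ℝ} (ha : 0 ≤ a) : (√a : ℂ) * √a = a := by
  rw [← Complex.ofReal_mul, Real.mul_self_sqrt ha]

section ShiftCoupling

variable {S G : Type*} [Fintype G] [AddGroup G] [DecidableEq G]

/-- Row `k` is the vector `∑ s, √(p s * q (k + ι s)) • (e s ⊗ e (k + ι s))`. For fixed `k` the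
partner `k + ι s` is injective in `s`, which kills cross terms in the partial trace over `G`; for
fixed `s` it runs over all of `G` as `k` does, which produces the factor `∑ g, q g`. -/
noncomputable def shiftCouplingFactor (ι : S → G) (p : S → ℝ) (q : G → ℝ) : Matrix G (S × G) ℂ :=
  of fun k x => if x.2 - ι x.1 = k then (√(p x.1 * q x.2) : ℂ) else 0

noncomputable def shiftCoupling (ι : S → G) (p : S → ℝ) (q : G → ℝ) :
    Matrix (S × G) (S × G) ℂ :=
  (shiftCouplingFactor ι p q)ᴴ * shiftCouplingFactor ι p q

variable (ι : S → G) (p : S → ℝ) (q : G → ℝ)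

lemma shiftCoupling_apply (x y : S × G) :
    shiftCoupling ι p q x y =
      if x.2 - ι x.1 = y.2 - ι y.1 then (√(p x.1 * q x.2) * √(p y.1 * q y.2) : ℂ) else 0 := by
  simp only [shiftCoupling, shiftCouplingFactor, mul_apply, conjTranspose_apply, of_apply,
    mul_ite, mul_zero]
  split_ifs <;> simp_all

variable [Fintype S]

lemma posSemidef_shiftCoupling : (shiftCoupling ι p q).PosSemidef :=
  posSemidef_conjTranspose_mul_self _

lemma rank_shiftCoupling_le : (shiftCoupling ι p q).rank ≤ Fintype.card G := by
  rw [shiftCoupling, rank_conjTranspose_mul_self]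
  exact rank_le_card_height _

variable {p q}

lemma ptraceB_shiftCoupling [DecidableEq S] (hι : Function.Injective ι)
    (hp : ∀ s, 0 ≤ p s) (hq : ∀ g, 0 ≤ q g) (hq1 : ∑ g, q g = 1) :
    ptraceB (shiftCoupling ι p q) = diagonal fun s => (p s : ℂ) := by
  ext s s'
  simp only [ptraceB, of_apply, shiftCoupling_apply, sub_right_inj, hι.eq_iff, diagonal_apply]
  split_ifs with h
  · subst h
    simp_rw [fun g => Complex.ofReal_sqrt_mul_self (mul_nonneg (hp s) (hq g)), Complex.ofReal_mul,
      ← Finset.mul_sum, ← Complex.ofReal_sum, hq1, Complex.ofReal_one, mul_one]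
  · simp

lemma ptraceA_shiftCoupling (hp : ∀ s, 0 ≤ p s) (hq : ∀ g, 0 ≤ q g) (hp1 : ∑ s, p s = 1) :
    ptraceA (shiftCoupling ι p q) = diagonal fun g => (q g : ℂ) := by
  ext g g'
  simp only [ptraceA, of_apply, shiftCoupling_apply, sub_left_inj, diagonal_apply]
  split_ifs with h
  · subst h
    simp_rw [fun s => Complex.ofReal_sqrt_mul_self (mul_nonneg (hp s) (hq g)), Complex.ofReal_mul,
      ← Finset.sum_mul, ← Complex.ofReal_sum, hp1, Complex.ofReal_one, one_mul]
  · simp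

end ShiftCoupling

lemma exists_diagonal_coupling_of_le {m n : ℕ} (hmn : m ≤ n) {p : Fin m → ℝ} {q : Fin n → ℝ}
    (hp : ∀ i, 0 ≤ p i) (hq : ∀ j, 0 ≤ q j) (hp1 : ∑ i, p i = 1) (hq1 : ∑ j, q j = 1) :
    ∃ σ : Matrix (Fin m × Fin n) (Fin m × Fin n) ℂ, σ.PosSemidef ∧
      ptraceB σ = diagonal (fun i => (p i : ℂ)) ∧ ptraceA σ = diagonal (fun j => (q j : ℂ)) ∧
      σ.rank ≤ n := by
  have : NeZero n := ⟨by rintro rfl; simp at hq1⟩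
  refine ⟨shiftCoupling (Fin.castLE hmn) p q, posSemidef_shiftCoupling _ p q,
    ptraceB_shiftCoupling _ (Fin.castLE_injective hmn) hp hq hq1,
    ptraceA_shiftCoupling _ hp hq hp1, ?_⟩
  exact (rank_shiftCoupling_le _ p q).trans_eq (Fintype.card_fin n)

lemma exists_diagonal_coupling {m n : ℕ} {p : Fin m → ℝ} {q : Fin n → ℝ}
    (hp : ∀ i, 0 ≤ p i) (hq : ∀ j, 0 ≤ q j) (hp1 : ∑ i, p i = 1) (hq1 : ∑ j, q j = 1) :
    ∃ σ : Matrix (Fin m × Fin n) (Fin m × Fin n) ℂ, σ.PosSemidef ∧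
      ptraceB σ = diagonal (fun i => (p i : ℂ)) ∧ ptraceA σ = diagonal (fun j => (q j : ℂ)) ∧
      σ.rank ≤ max m n := by
  rcases le_total m n with hmn | hnm
  · obtain ⟨σ, hσ, hB, hA, hrank⟩ := exists_diagonal_coupling_of_le hmn hp hq hp1 hq1
    exact ⟨σ, hσ, hB, hA, hrank.trans (le_max_right m n)⟩
  · obtain ⟨σ, hσ, hB, hA, hrank⟩ := exists_diagonal_coupling_of_le hnm hq hp hq1 hp1
    refine ⟨σ.submatrix Prod.swap Prod.swap, hσ.submatrix _, hA, hB, ?_⟩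
    rw [← Equiv.coe_prodComm, rank_submatrix]
    exact hrank.trans (le_max_left m n)

/-- Given density matrices `τ_A` on `A` and `τ_B` on `B`, there is a joint density matrix
`σ_AB` with marginals `τ_A`, `τ_B` and `rank(σ_AB) ≤ max(rank τ_A, rank τ_B)`. -/
theorem exists_joint_state_rank_le_max
    {A B : Type*} [Fintype A] [Fintype B] [DecidableEq A] [DecidableEq B]
    (τA : Matrix A A ℂ) (τB : Matrix B B ℂ)
    (hA : τA.PosSemidef) (htrA : τA.trace = 1)
    (hB : τB.PosSemidef) (htrB : τB.trace = 1) :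
    ∃ σ : Matrix (A × B) (A × B) ℂ, σ.PosSemidef ∧ σ.trace = 1 ∧
      ptraceB σ = τA ∧ ptraceA σ = τB ∧ σ.rank ≤ max τA.rank τB.rank := by
  obtain ⟨X, p, hX, hp, hτA⟩ := hA.exists_isometry_diagonal_eq
  obtain ⟨Y, q, hY, hq, hτB⟩ := hB.exists_isometry_diagonal_eq
  have hp1 : ∑ i, p i = 1 := by
    have h := trace_mul_diagonal_mul_conjTranspose hX fun i => (p i : ℂ)
    rw [← hτA, htrA] at h
    exact_mod_cast h.symm
  have hq1 : ∑ j, q j = 1 := by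
    have h := trace_mul_diagonal_mul_conjTranspose hY fun j => (q j : ℂ)
    rw [← hτB, htrB] at h
    exact_mod_cast h.symm
  obtain ⟨σ, hσ, hσB, hσA, hrank⟩ := exists_diagonal_coupling hp hq hp1 hq1
  have hmarginalB : ptraceB ((X ⊗ₖ Y) * σ * (X ⊗ₖ Y)ᴴ) = τA := by
    rw [ptraceB_kronecker_mul_mul_conjTranspose X hY, hσB, ← hτA]
  refine ⟨(X ⊗ₖ Y) * σ * (X ⊗ₖ Y)ᴴ, hσ.mul_mul_conjTranspose_same _, ?_, hmarginalB, ?_, ?_⟩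
  · rw [← trace_ptraceB, hmarginalB, htrA]
  · rw [ptraceA_kronecker_mul_mul_conjTranspose hX Y, hσA, ← hτB]
  · exact (rank_mul_le_left _ _).trans ((rank_mul_le_right _ _).trans hrank)
end

section
/- Let H = Σ_{i=1}^{N-1} H_{i,i+1} be a translationally invariant nearest-neighbor Hamiltonian on a chain of N sites with each ‖H_{i,i+1}‖ ≤ 1 and ground state energy E_0. Then for any state |η⟩ on the chain and any interval of sites [a, b-1] with 1 ≤ a < b ≤ N, ⟨η| Σ_{i=a}^{b-2} H_{i,i+1} |η⟩ ≥ ((b−a)/(N−1))·E_0 − 1. -/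
/-!
Write `e n = groundEnergy h (n + 1)` for the ground energy of the open chain with `n` bonds.
Cutting a state along a window of `n` consecutive bonds writes the window's energy as a mixture
of energies of states of the `n`-bond chain, so it is at least `e n`; in particular
`e x + e y ≤ e (x + y)`. Gluing states of two chains by one bond in a product state gives
`e (x + y + 1) ≤ e x + e y + ‖h‖`. Thus `f n = n ‖h‖ - e n` is subadditive with
`f x + f y ≤ f (x + y + 1)`, and a Euclidean-algorithm induction turns this into
`M f m ≤ (m + 1) f M`, i.e. `e m ≥ (m + 1) / M · e M - ‖h‖`. Take `m = b - a - 1` bonds of the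
interval, `M = N - 1` and `e M = E₀`.
-/

open Matrix

/-- Operator norm of a matrix, acting on the Euclidean space. -/
noncomputable def opNorm {n : Type*} [Fintype n] [DecidableEq n]
    (A : Matrix n n ℂ) : ℝ :=
  ‖Matrix.toEuclideanCLM (𝕜 := ℂ) A‖

/-- The nearest-neighbor term `h` acting on sites `i, i+1` of a chain of `N` sites with
local space `α` (identity elsewhere). -/
noncomputable def twoSite (N : ℕ) {α : Type*} [Fintype α] [DecidableEq α]
    (h : Matrix (α × α) (α × α) ℂ) (i : ℕ) (hi : i + 1 < N) :
    Matrix (Fin N → α) (Fin N → α) ℂ :=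
  Matrix.of fun x y =>
    if ∀ j : Fin N, j.val ≠ i → j.val ≠ i + 1 → x j = y j then
      h (x ⟨i, by omega⟩, x ⟨i + 1, hi⟩) (y ⟨i, by omega⟩, y ⟨i + 1, hi⟩)
    else 0

/-- The translationally invariant nearest-neighbor Hamiltonian `H = Σ_{i=0}^{N-2} h_{i,i+1}`. -/
noncomputable def chainH (N : ℕ) {α : Type*} [Fintype α] [DecidableEq α]
    (h : Matrix (α × α) (α × α) ℂ) : Matrix (Fin N → α) (Fin N → α) ℂ :=
  ∑ i : Fin (N - 1), twoSite N h i.val (by have := i.isLt; omega)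

/-- Energy `⟨φ|H|φ⟩` of a state `φ`. -/
noncomputable def energyR {n : Type*} [Fintype n] (H : Matrix n n ℂ) (φ : n → ℂ) : ℝ :=
  (star φ ⬝ᵥ H.mulVec φ).re

lemma Subadditive.mul_le_succ_mul {f : ℕ → ℝ} (hsub : Subadditive f) (h0 : f 0 = 0)
    (hgap : ∀ x y, f x + f y ≤ f (x + y + 1)) (a b : ℕ) :
    b * f a ≤ (a + 1) * f b := by
  have hnonneg (n : ℕ) : 0 ≤ f n := by
    induction n with
    | zero => exact h0.ge
    | succ n ih => linarith [hgap n 0, h0]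
  induction hs : a + b using Nat.strong_induction_on generalizing a b with
  | _ s ih =>
    rcases lt_trichotomy a b with hab | rfl | hab
    · obtain ⟨c, rfl⟩ : ∃ c, b = a + c + 1 := ⟨b - a - 1, by omega⟩
      have hc := ih (a + c) (by omega) a c rfl
      have hglue := hgap a c
      push_cast
      nlinarith [hnonneg a]
    · nlinarith [hnonneg a]
    · obtain ⟨c, rfl⟩ : ∃ c, a = b + c := ⟨a - b, by omega⟩
      rcases Nat.eq_zero_or_pos b with rfl | hb
      · simp [h0]
      have hc := ih (c + b) (by omega) c b rfl
      have hsplit := hsub b c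
      push_cast
      nlinarith

section QuadraticForm

variable {α m n ι : Type*} [Fintype m] [Fintype n]

noncomputable def sqNorm (φ : n → ℂ) : ℝ := ∑ x, ‖φ x‖ ^ 2

lemma sqNorm_nonneg (φ : n → ℂ) : 0 ≤ sqNorm φ :=
  Finset.sum_nonneg fun _ _ => by positivity

lemma sqNorm_smul (c : ℂ) (φ : n → ℂ) : sqNorm (c • φ) = ‖c‖ ^ 2 * sqNorm φ := by
  simp [sqNorm, Finset.mul_sum, mul_pow]

lemma sqNorm_comp_equiv (φ : n → ℂ) (e : m ≃ n) : sqNorm (φ ∘ e) = sqNorm φ :=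
  e.sum_comp fun x => ‖φ x‖ ^ 2

lemma sqNorm_comp_cast [Fintype α] {K L : ℕ} (hKL : K = L) (v : (Fin K → α) → ℂ) :
    sqNorm (fun z : Fin L → α => v (z ∘ Fin.cast hKL)) = sqNorm v :=
  sqNorm_comp_equiv v ((finCongr hKL.symm).arrowCongr (Equiv.refl α))

lemma sqNorm_prod (ψ : n × m → ℂ) : sqNorm ψ = ∑ z, sqNorm fun u => ψ (u, z) := by
  simp only [sqNorm, Fintype.sum_prod_type]
  exact Finset.sum_comm

lemma exists_sqNorm_eq_one [Nonempty n] [DecidableEq n] : ∃ φ : n → ℂ, sqNorm φ = 1 :=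
  ⟨Pi.single (Classical.arbitrary n) 1, by simp [sqNorm, Pi.single_apply, apply_ite]⟩

lemma energyR_sum (s : Finset ι) (A : ι → Matrix n n ℂ) (φ : n → ℂ) :
    energyR (∑ i ∈ s, A i) φ = ∑ i ∈ s, energyR (A i) φ := by
  simp [energyR, sum_mulVec, dotProduct_sum, Complex.re_sum]

lemma energyR_smul (A : Matrix n n ℂ) (c : ℂ) (φ : n → ℂ) :
    energyR A (c • φ) = ‖c‖ ^ 2 * energyR A φ := by
  have hc : c * star c = (‖c‖ ^ 2 : ℝ) := by
    rw [Complex.star_def, Complex.mul_conj, Complex.normSq_eq_norm_sq]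
  simp only [energyR, mulVec_smul, star_smul, smul_dotProduct, dotProduct_smul, smul_eq_mul,
    ← mul_assoc, hc, Complex.re_ofReal_mul]

lemma energyR_submatrix (A : Matrix n n ℂ) (e : m ≃ n) (φ : n → ℂ) :
    energyR (A.submatrix e e) (φ ∘ e) = energyR A φ := by
  simp only [energyR, dotProduct, mulVec, Function.comp_apply, Pi.star_apply, submatrix_apply]
  congr 1
  rw [← e.sum_comp]
  refine Finset.sum_congr rfl fun x _ => ?_
  rw [← e.sum_comp]

lemma energyR_blockDiagonal [DecidableEq m] (B : m → Matrix n n ℂ) (ψ : n × m → ℂ) :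
    energyR (blockDiagonal B) ψ = ∑ z, energyR (B z) fun u => ψ (u, z) := by
  simp only [energyR, dotProduct, mulVec, Fintype.sum_prod_type, blockDiagonal_apply,
    Pi.star_apply, ite_mul, zero_mul, Finset.sum_ite_eq, Finset.mem_univ, if_true,
    Complex.re_sum]
  exact Finset.sum_comm

lemma abs_energyR_le [DecidableEq n] (A : Matrix n n ℂ) (φ : n → ℂ) :
    |energyR A φ| ≤ opNorm A * sqNorm φ := by
  set x := WithLp.toLp 2 φ
  have hx : ‖x‖ ^ 2 = sqNorm φ := by
    rw [EuclideanSpace.norm_eq, Real.sq_sqrt (by positivity)]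
    rfl
  have hinner : energyR A φ = (inner ℂ x (toEuclideanCLM (𝕜 := ℂ) A x)).re := by
    rw [EuclideanSpace.inner_eq_star_dotProduct, toEuclideanCLM_toLp, dotProduct_comm]
    rfl
  calc |energyR A φ| ≤ ‖inner ℂ x (toEuclideanCLM (𝕜 := ℂ) A x)‖ :=
        hinner ▸ Complex.abs_re_le_norm _
    _ ≤ ‖x‖ * (opNorm A * ‖x‖) :=
        (norm_inner_le_norm _ _).trans (by gcongr; exact (toEuclideanCLM (𝕜 := ℂ) A).le_opNorm x)
    _ = opNorm A * sqNorm φ := by rw [← hx]; ring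

end QuadraticForm

section Window

variable {α : Type*} {N : ℕ}

def windowEquiv (t K : ℕ) (htK : t + K ≤ N) :
    (Fin N → α) ≃ (Fin K → α) × (Fin (N - K) → α) where
  toFun x :=
    (fun i => x ⟨t + i, by omega⟩,
     fun j => x ⟨if j < t then j else j + K, by split_ifs <;> omega⟩)
  invFun uz j :=
    if hj : t ≤ j ∧ j < t + K then uz.1 ⟨j - t, by omega⟩
    else uz.2 ⟨if j < t then j else j - K, by split_ifs <;> omega⟩
  left_inv x := by
    funext j
    by_cases hj : t ≤ j ∧ j < t + K
    · simp only [dif_pos hj]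
      congr
      omega
    · simp only [dif_neg hj]
      congr
      split_ifs <;> omega
  right_inv uz := by
    ext i
    · simp only [dif_pos (show t ≤ t + i ∧ t + i < t + K by omega)]
      simp
    · dsimp only
      split_ifs <;> first | omega | simp

variable {t K : ℕ} (htK : t + K ≤ N)

lemma windowEquiv_symm_apply_of_mem (u : Fin K → α) (z : Fin (N - K) → α) (j : Fin N)
    (hj : t ≤ j ∧ j < t + K) :
    (windowEquiv t K htK).symm (u, z) j = u ⟨j - t, by omega⟩ :=
  dif_pos hj

lemma windowEquiv_symm_apply_of_lt (u : Fin K → α) (z : Fin (N - K) → α) (j : Fin N)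
    (hj : j < t) :
    (windowEquiv t K htK).symm (u, z) j = z ⟨j, by omega⟩ := by
  change dite _ _ _ = _
  rw [dif_neg (by omega)]
  simp [hj]

lemma windowEquiv_symm_apply_of_ge (u : Fin K → α) (z : Fin (N - K) → α) (j : Fin N)
    (hj : t + K ≤ j) :
    (windowEquiv t K htK).symm (u, z) j = z ⟨j - K, by omega⟩ := by
  change dite _ _ _ = _
  rw [dif_neg (by omega)]
  simp [show ¬ (j : ℕ) < t by omega]

lemma windowEquiv_symm_agree_iff {i : ℕ} (hi : i + 1 < K) (u u' : Fin K → α)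
    (z z' : Fin (N - K) → α) :
    (∀ j : Fin N, j.val ≠ t + i → j.val ≠ t + i + 1 →
        (windowEquiv t K htK).symm (u, z) j = (windowEquiv t K htK).symm (u', z') j) ↔
      z = z' ∧ ∀ j : Fin K, j.val ≠ i → j.val ≠ i + 1 → u j = u' j := by
  set E := windowEquiv (α := α) t K htK
  constructor
  · intro hagree
    have hfst (u z) : u = (E (E.symm (u, z))).1 := by rw [E.apply_symm_apply]
    have hsnd (u z) : z = (E (E.symm (u, z))).2 := by rw [E.apply_symm_apply]
    refine ⟨?_, fun j hj₁ hj₂ => ?_⟩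
    · rw [hsnd u z, hsnd u' z']
      funext j
      exact hagree _ (by dsimp only; split_ifs <;> omega) (by dsimp only; split_ifs <;> omega)
    · rw [hfst u z, hfst u' z']
      exact hagree _ (by simp; omega) (by simp; omega)
  · rintro ⟨rfl, hu⟩ j hj₁ hj₂
    by_cases hj : t ≤ j ∧ j < t + K
    · rw [windowEquiv_symm_apply_of_mem htK _ _ _ hj, windowEquiv_symm_apply_of_mem htK _ _ _ hj]
      exact hu _ (by simp; omega) (by simp; omega)
    · change dite _ _ _ = dite _ _ _
      rw [dif_neg hj, dif_neg hj]

variable [Fintype α]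

lemma sqNorm_eq_sum_windowEquiv (φ : (Fin N → α) → ℂ) :
    sqNorm φ = ∑ z, sqNorm fun u => φ ((windowEquiv t K htK).symm (u, z)) := by
  rw [← sqNorm_comp_equiv φ (windowEquiv t K htK).symm, sqNorm_prod]
  rfl

lemma sqNorm_of_windowEquiv_symm_eq_mul {φ : (Fin N → α) → ℂ} {c : (Fin (N - K) → α) → ℂ}
    {u : (Fin K → α) → ℂ}
    (hφ : ∀ u' z, φ ((windowEquiv t K htK).symm (u', z)) = c z * u u') :
    sqNorm φ = sqNorm c * sqNorm u := by
  have hslice (z) : (fun u' => φ ((windowEquiv t K htK).symm (u', z))) = c z • u :=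
    funext fun u' => hφ u' z
  rw [sqNorm_eq_sum_windowEquiv htK φ]
  simp only [hslice, sqNorm_smul, ← Finset.sum_mul]
  rfl

variable [DecidableEq α]

lemma twoSite_submatrix_windowEquiv (h : Matrix (α × α) (α × α) ℂ) {i : ℕ} (hi : i + 1 < K) :
    (twoSite N h (t + i) (by omega)).submatrix (windowEquiv t K htK).symm
        (windowEquiv t K htK).symm =
      blockDiagonal fun _ => twoSite K h i hi := by
  ext ⟨u, z⟩ ⟨u', z'⟩
  simp only [submatrix_apply, blockDiagonal_apply, twoSite, of_apply,
    windowEquiv_symm_agree_iff htK hi]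
  have hsite (u : Fin K → α) (z) (k : ℕ) (hk : k < K) :
      (windowEquiv t K htK).symm (u, z) ⟨t + k, by omega⟩ = u ⟨k, hk⟩ := by
    rw [windowEquiv_symm_apply_of_mem htK _ _ _ (by simp; omega)]
    simp
  have hsite_succ (u : Fin K → α) (z) :
      (windowEquiv t K htK).symm (u, z) ⟨t + i + 1, by omega⟩ = u ⟨i + 1, hi⟩ :=
    hsite u z (i + 1) hi
  rw [hsite u z i (by omega), hsite u' z' i (by omega), hsite_succ, hsite_succ]
  by_cases hz : z = z' <;> simp [hz]

end Window

section Chain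

variable {α : Type*} [Fintype α] [DecidableEq α] (h : Matrix (α × α) (α × α) ℂ) {N : ℕ}

noncomputable def bondEnergy (φ : (Fin N → α) → ℂ) (i : ℕ) : ℝ :=
  if hi : i + 1 < N then energyR (twoSite N h i hi) φ else 0

lemma energyR_chainH (φ : (Fin N → α) → ℂ) :
    energyR (chainH N h) φ = ∑ i ∈ Finset.range (N - 1), bondEnergy h φ i := by
  rw [chainH, energyR_sum, ← Fin.sum_univ_eq_sum_range]
  refine Finset.sum_congr rfl fun i _ => ?_
  rw [bondEnergy, dif_pos (by omega)]

lemma energyR_sum_twoSite_Ico {a c : ℕ} (hc : c < N) (φ : (Fin N → α) → ℂ) :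
    energyR (∑ i : (Finset.Ico a c),
        twoSite N h i.val (by have := (Finset.mem_Ico.mp i.2); omega)) φ =
      ∑ i ∈ Finset.range (c - a), bondEnergy h φ (a + i) := by
  rw [energyR_sum, ← Finset.sum_Ico_eq_sum_range (bondEnergy h φ),
    ← Finset.sum_coe_sort (Finset.Ico a c)]
  refine Finset.sum_congr rfl fun i _ => ?_
  rw [bondEnergy, dif_pos]

lemma sum_bondEnergy_eq_sum_energyR_chainH {t n : ℕ} (htn : t + (n + 1) ≤ N) (φ : (Fin N → α) → ℂ) :
    ∑ i ∈ Finset.range n, bondEnergy h φ (t + i) =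
      ∑ z, energyR (chainH (n + 1) h) fun u => φ ((windowEquiv t (n + 1) htn).symm (u, z)) := by
  simp_rw [energyR_chainH, Nat.add_sub_cancel]
  rw [Finset.sum_comm]
  refine Finset.sum_congr rfl fun i hi => ?_
  have hi : i + 1 < n + 1 := by simpa using hi
  rw [bondEnergy, dif_pos (by omega), ← energyR_submatrix _ (windowEquiv t (n + 1) htn).symm,
    twoSite_submatrix_windowEquiv htn h hi, energyR_blockDiagonal]
  simp only [bondEnergy, dif_pos hi]
  rfl

lemma sum_bondEnergy_of_windowEquiv_symm_eq_mul {t n : ℕ} (htn : t + (n + 1) ≤ N)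
    {φ : (Fin N → α) → ℂ} {c : (Fin (N - (n + 1)) → α) → ℂ} {u : (Fin (n + 1) → α) → ℂ}
    (hφ : ∀ u' z, φ ((windowEquiv t (n + 1) htn).symm (u', z)) = c z * u u') :
    ∑ i ∈ Finset.range n, bondEnergy h φ (t + i) = sqNorm c * energyR (chainH (n + 1) h) u := by
  have hslice (z) : (fun u' => φ ((windowEquiv t (n + 1) htn).symm (u', z))) = c z • u :=
    funext fun u' => hφ u' z
  simp only [sum_bondEnergy_eq_sum_energyR_chainH h htn, hslice, energyR_smul, sqNorm,
    Finset.sum_mul]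

lemma chainH_two :
    chainH 2 h = h.submatrix (piFinTwoEquiv fun _ => α) (piFinTwoEquiv fun _ => α) := by
  ext u u'
  simp [chainH, twoSite, Fin.forall_fin_two]

lemma bondEnergy_le (φ : (Fin N → α) → ℂ) (i : ℕ) : bondEnergy h φ i ≤ opNorm h * sqNorm φ := by
  by_cases hi : i + 1 < N
  · have hwindow := sum_bondEnergy_eq_sum_energyR_chainH h (t := i) (n := 1) hi φ
    rw [Finset.sum_range_one, add_zero] at hwindow
    rw [hwindow, sqNorm_eq_sum_windowEquiv (t := i) (K := 2) hi, Finset.mul_sum]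
    refine Finset.sum_le_sum fun z _ => ?_
    set ψ := fun u => φ ((windowEquiv i 2 hi).symm (u, z))
    set e := piFinTwoEquiv fun _ => α
    have hsub := energyR_submatrix h e (ψ ∘ e.symm)
    rw [Function.comp_assoc, e.symm_comp_self, Function.comp_id] at hsub
    rw [chainH_two, hsub, ← sqNorm_comp_equiv ψ e.symm]
    exact (le_abs_self _).trans (abs_energyR_le _ _)
  · rw [bondEnergy, dif_neg hi]
    exact mul_nonneg (norm_nonneg _) (sqNorm_nonneg φ)

end Chain

section ProductState

variable {α : Type*} {x y : ℕ}

def productState (u : (Fin (x + 1) → α) → ℂ) (v : (Fin (y + 1) → α) → ℂ) :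
    (Fin (x + y + 2) → α) → ℂ :=
  fun w => u (fun i => w ⟨i, by omega⟩) * v (fun j => w ⟨x + 1 + j, by omega⟩)

variable (u : (Fin (x + 1) → α) → ℂ) (v : (Fin (y + 1) → α) → ℂ)

lemma productState_windowEquiv_symm_left (u' : Fin (x + 1) → α)
    (z : Fin (x + y + 2 - (x + 1)) → α) :
    productState u v ((windowEquiv 0 (x + 1) (by omega)).symm (u', z)) =
      v (z ∘ Fin.cast (by omega)) * u u' := by
  rw [productState, mul_comm]
  congr 2 <;> funext i
  · rw [windowEquiv_symm_apply_of_ge _ _ _ _ (by simp)]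
    congr 1
    ext
    simp
  · rw [windowEquiv_symm_apply_of_mem _ _ _ _ (by simp; omega)]
    simp

lemma productState_windowEquiv_symm_right (v' : Fin (y + 1) → α)
    (z : Fin (x + y + 2 - (y + 1)) → α) :
    productState u v ((windowEquiv (x + 1) (y + 1) (by omega)).symm (v', z)) =
      u (z ∘ Fin.cast (by omega)) * v v' := by
  rw [productState]
  congr 2 <;> funext i
  · rw [windowEquiv_symm_apply_of_lt _ _ _ _ (by simp; omega)]
    rfl
  · rw [windowEquiv_symm_apply_of_mem _ _ _ _ (by simp; omega)]
    simp

variable [Fintype α]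

lemma sqNorm_productState : sqNorm (productState u v) = sqNorm u * sqNorm v := by
  rw [sqNorm_of_windowEquiv_symm_eq_mul _ (productState_windowEquiv_symm_left u v),
    sqNorm_comp_cast, mul_comm]

variable [DecidableEq α] (h : Matrix (α × α) (α × α) ℂ)

lemma energyR_chainH_productState :
    energyR (chainH (x + y + 2) h) (productState u v) =
      sqNorm v * energyR (chainH (x + 1) h) u + bondEnergy h (productState u v) x +
        sqNorm u * energyR (chainH (y + 1) h) v := by
  have hleft := sum_bondEnergy_of_windowEquiv_symm_eq_mul h _
    (productState_windowEquiv_symm_left u v)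
  have hright := sum_bondEnergy_of_windowEquiv_symm_eq_mul h _
    (productState_windowEquiv_symm_right u v)
  simp only [zero_add, sqNorm_comp_cast] at hleft hright
  rw [energyR_chainH, show x + y + 2 - 1 = x + 1 + y by omega, Finset.sum_range_add,
    Finset.sum_range_succ, hleft, hright]

end ProductState

section GroundEnergy

variable {α : Type*} [Fintype α] [DecidableEq α] (h : Matrix (α × α) (α × α) ℂ)

noncomputable def groundEnergy (N : ℕ) : ℝ :=
  sInf {r | ∃ φ : (Fin N → α) → ℂ, sqNorm φ = 1 ∧ r = energyR (chainH N h) φ}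

variable {N : ℕ}

lemma groundEnergy_le {φ : (Fin N → α) → ℂ} (hφ : sqNorm φ = 1) :
    groundEnergy h N ≤ energyR (chainH N h) φ := by
  refine csInf_le ⟨-opNorm (chainH N h), ?_⟩ ⟨φ, hφ, rfl⟩
  rintro _ ⟨ψ, hψ, rfl⟩
  have := abs_energyR_le (chainH N h) ψ
  rw [hψ, mul_one] at this
  exact neg_le_of_abs_le this

lemma le_groundEnergy [Nonempty α] {c : ℝ}
    (hc : ∀ φ : (Fin N → α) → ℂ, sqNorm φ = 1 → c ≤ energyR (chainH N h) φ) :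
    c ≤ groundEnergy h N := by
  obtain ⟨φ, hφ⟩ := exists_sqNorm_eq_one (n := Fin N → α)
  refine le_csInf ⟨_, φ, hφ, rfl⟩ ?_
  rintro _ ⟨ψ, hψ, rfl⟩
  exact hc ψ hψ

lemma groundEnergy_mul_sqNorm_le (φ : (Fin N → α) → ℂ) :
    groundEnergy h N * sqNorm φ ≤ energyR (chainH N h) φ := by
  rcases (sqNorm_nonneg φ).eq_or_lt with hφ | hφ
  · have := abs_energyR_le (chainH N h) φ
    rw [← hφ, mul_zero] at this ⊢
    exact (abs_nonpos_iff.mp this).ge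
  · set c : ℝ := √(sqNorm φ)
    have hc2 : ‖(c : ℂ)‖ ^ 2 = sqNorm φ := by
      rw [Complex.norm_real, Real.norm_of_nonneg (Real.sqrt_nonneg _), Real.sq_sqrt hφ.le]
    have hnorm : sqNorm ((c : ℂ)⁻¹ • φ) = 1 := by
      rw [sqNorm_smul, norm_inv, inv_pow, hc2, inv_mul_cancel₀ hφ.ne']
    calc groundEnergy h N * sqNorm φ
        ≤ energyR (chainH N h) ((c : ℂ)⁻¹ • φ) * sqNorm φ := by
          gcongr
          exact groundEnergy_le h hnorm
      _ = energyR (chainH N h) φ := by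
          rw [energyR_smul, norm_inv, inv_pow, hc2, mul_comm, ← mul_assoc,
            mul_inv_cancel₀ hφ.ne', one_mul]

lemma groundEnergy_mul_sqNorm_le_sum_bondEnergy {t n : ℕ} (htn : t + (n + 1) ≤ N)
    (φ : (Fin N → α) → ℂ) :
    groundEnergy h (n + 1) * sqNorm φ ≤ ∑ i ∈ Finset.range n, bondEnergy h φ (t + i) := by
  rw [sum_bondEnergy_eq_sum_energyR_chainH h htn, sqNorm_eq_sum_windowEquiv htn, Finset.mul_sum]
  exact Finset.sum_le_sum fun z _ => groundEnergy_mul_sqNorm_le h _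

variable [Nonempty α]

lemma groundEnergy_one : groundEnergy h 1 = 0 := by
  have hchain : chainH 1 h = 0 := by simp [chainH]
  obtain ⟨φ, hφ⟩ := exists_sqNorm_eq_one (n := Fin 1 → α)
  refine le_antisymm ?_ (le_groundEnergy h fun ψ _ => ?_)
  · simpa [hchain, energyR] using groundEnergy_le h hφ
  · simp [hchain, energyR]

lemma groundEnergy_add_le (x y : ℕ) :
    groundEnergy h (x + 1) + groundEnergy h (y + 1) ≤ groundEnergy h (x + y + 1) := by
  refine le_groundEnergy h fun φ hφ => ?_
  have hleft := groundEnergy_mul_sqNorm_le_sum_bondEnergy h (t := 0) (n := x) (by omega) φ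
  have hright := groundEnergy_mul_sqNorm_le_sum_bondEnergy h (t := x) (n := y) (by omega) φ
  rw [energyR_chainH, Nat.add_sub_cancel, Finset.sum_range_add]
  simp only [hφ, mul_one, zero_add] at hleft hright
  exact add_le_add hleft hright

lemma groundEnergy_le_add_add_opNorm (x y : ℕ) :
    groundEnergy h (x + y + 2) ≤ groundEnergy h (x + 1) + groundEnergy h (y + 1) + opNorm h := by
  have key (u : (Fin (x + 1) → α) → ℂ) (v : (Fin (y + 1) → α) → ℂ) (hu : sqNorm u = 1)
      (hv : sqNorm v = 1) :
      groundEnergy h (x + y + 2) ≤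
        energyR (chainH (x + 1) h) u + energyR (chainH (y + 1) h) v + opNorm h := by
    have hψ : sqNorm (productState u v) = 1 := by rw [sqNorm_productState, hu, hv, one_mul]
    have hbond := bondEnergy_le h (productState u v) x
    rw [hψ, mul_one] at hbond
    have := groundEnergy_le h hψ
    rw [energyR_chainH_productState, hu, hv] at this
    linarith
  suffices groundEnergy h (x + y + 2) - opNorm h - groundEnergy h (y + 1) ≤
      groundEnergy h (x + 1) by linarith
  refine le_groundEnergy h fun u hu => ?_
  suffices groundEnergy h (x + y + 2) - opNorm h - energyR (chainH (x + 1) h) u ≤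
      groundEnergy h (y + 1) by linarith
  refine le_groundEnergy h fun v hv => ?_
  linarith [key u v hu hv]

lemma div_mul_groundEnergy_sub_opNorm_le (m M : ℕ) (hM : 0 < M) :
    (m + 1) / M * groundEnergy h (M + 1) - opNorm h ≤ groundEnergy h (m + 1) := by
  set f : ℕ → ℝ := fun n => n * opNorm h - groundEnergy h (n + 1)
  have hsub : Subadditive f := fun x y => by
    simp only [f]
    push_cast
    linarith [groundEnergy_add_le h x y]
  have hgap (x y : ℕ) : f x + f y ≤ f (x + y + 1) := by
    simp only [f]
    push_cast
    linarith [groundEnergy_le_add_add_opNorm h x y]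
  have h0 : f 0 = 0 := by simp [f, groundEnergy_one]
  have key := hsub.mul_le_succ_mul h0 hgap m M
  simp only [f] at key
  rw [div_mul_eq_mul_div, sub_le_iff_le_add, div_le_iff₀ (by positivity)]
  linarith

end GroundEnergy

/-- For a translationally invariant nearest-neighbor Hamiltonian with terms of norm at most 1
and ground energy `E₀`, any state `η` and interval `[a, b-1]` of sites satisfy
`⟨η| Σ_{i=a}^{b-2} H_{i,i+1} |η⟩ ≥ ((b-a)/(N-1))·E₀ − 1`. -/
theorem partial_chain_energy_lower_bound (N d : ℕ) (hN : 2 ≤ N)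
    (h : Matrix (Fin d × Fin d) (Fin d × Fin d) ℂ)
    (hnorm : opNorm h ≤ 1) (E0 : ℝ)
    (hE0 : IsLeast {r : ℝ | ∃ φ : (Fin N → Fin d) → ℂ,
      (∑ x, ‖φ x‖ ^ 2) = 1 ∧ r = energyR (chainH N h) φ} E0)
    (η : (Fin N → Fin d) → ℂ) (hη : (∑ x, ‖η x‖ ^ 2) = 1)
    (a b : ℕ) (hab : a < b) (hb : b ≤ N) :
    ((b : ℝ) - a) / ((N : ℝ) - 1) * E0 - 1 ≤
      energyR (∑ i : (Finset.Ico a (b - 1)),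
        twoSite N h i.val (by have := (Finset.mem_Ico.mp i.2); omega)) η := by
  obtain ⟨w, -, -⟩ := Finset.exists_ne_zero_of_sum_ne_zero (hη ▸ one_ne_zero)
  have : Nonempty (Fin d) := ⟨w ⟨0, by omega⟩⟩
  obtain ⟨M, rfl⟩ : ∃ M, N = M + 1 := ⟨N - 1, by omega⟩
  set m := b - 1 - a
  have hwindow := groundEnergy_mul_sqNorm_le_sum_bondEnergy h (t := a) (n := m) (by omega) η
  rw [show sqNorm η = 1 from hη, mul_one] at hwindow
  have hE0 : groundEnergy h (M + 1) = E0 := hE0.csInf_eq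
  have hba : (b : ℝ) - a = m + 1 := by
    rw [sub_eq_iff_eq_add']
    norm_cast
    omega
  calc ((b : ℝ) - a) / ((M + 1 : ℕ) - 1) * E0 - 1
      ≤ (m + 1) / M * groundEnergy h (M + 1) - opNorm h := by
        rw [hba, hE0, Nat.cast_succ, add_sub_cancel_right]
        linarith
    _ ≤ groundEnergy h (m + 1) := div_mul_groundEnergy_sub_opNorm_le h m M (by omega)
    _ ≤ _ := by rwa [energyR_sum_twoSite_Ico h (by omega)]
end

section
/- Let |ψ⟩ be a pure state on a bipartite system L⊗R with reduced states τ_L, τ_R. Let P_L be the projector onto the top-χ eigenvectors of τ_L, q = 1/Tr(P_L τ_L), and |ν⟩ = √q P_L|ψ⟩. Then for all operators A on L and B on R with ‖A‖,‖B‖ ≤ 1, |⟨ν|A⊗B|ν⟩ − ⟨ν|A⊗I|ν⟩⟨ν|I⊗B|ν⟩| ≤ (q+q²)·Cor(L:R)_{|ψ⟩}, where Cor(L:R)_{|ψ⟩} = max_{‖M‖,‖N‖≤1} |⟨ψ|M⊗N|ψ⟩ − ⟨ψ|M⊗I|ψ⟩⟨ψ|I⊗N|ψ⟩|. -/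
open Matrix
open scoped Kronecker

/-- Outer product `|φ⟩⟨φ|`. -/
noncomputable def outerM {n : Type*} (φ : n → ℂ) : Matrix n n ℂ :=
  Matrix.vecMulVec φ (star φ)

/-- Partial trace over the second factor `R`. -/
noncomputable def ptraceR {L R : Type*} [Fintype L] [Fintype R]
    (σ : Matrix (L × R) (L × R) ℂ) : Matrix L L ℂ :=
  Matrix.of fun a a' => ∑ b, σ (a, b) (a', b)

/-- Expectation value `⟨φ|C|φ⟩`. -/
noncomputable def expval {n : Type*} [Fintype n] (C : Matrix n n ℂ) (φ : n → ℂ) : ℂ :=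
  star φ ⬝ᵥ C.mulVec φ

/-!
Conjugating by `Q = P ⊗ 1` turns every expectation value in `ν` into `q` times the expectation
value in `ψ` of `P X P ⊗ Y`. Since `q ⟨ψ|P ⊗ 1|ψ⟩ = 1`, the connected correlator of `A, B` in `ν`
becomes `q Cor_ψ(PAP, B) - q² ⟨ψ|PAP ⊗ 1|ψ⟩ Cor_ψ(P, B)`, and `PAP` and `P` again have operator
norm at most `1`.
-/

open scoped Matrix.Norms.L2Operator

noncomputable def connectedCorrelator {L R : Type*} [Fintype L] [Fintype R]
    [DecidableEq L] [DecidableEq R] (A : Matrix L L ℂ) (B : Matrix R R ℂ) (φ : L × R → ℂ) : ℂ :=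
  expval (A ⊗ₖ B) φ - expval (A ⊗ₖ (1 : Matrix R R ℂ)) φ * expval ((1 : Matrix L L ℂ) ⊗ₖ B) φ

lemma IsStarProjection.norm_mul_mul_le {E : Type*} [NonUnitalNormedRing E] [StarRing E]
    [CStarRing E] {p : E} (hp : IsStarProjection p) (a : E) : ‖p * a * p‖ ≤ ‖a‖ := by
  have hp1 := hp.norm_le
  calc ‖p * a * p‖ ≤ ‖p‖ * ‖a‖ * ‖p‖ := (norm_mul_le _ _).trans <|
        mul_le_mul_of_nonneg_right (norm_mul_le _ _) (norm_nonneg _)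
    _ ≤ 1 * ‖a‖ * 1 := by gcongr
    _ = ‖a‖ := by ring

section expval

variable {n : Type*} [Fintype n]

lemma expval_smul (C : Matrix n n ℂ) (a : ℂ) (w : n → ℂ) :
    expval C (a • w) = star a * a * expval C w := by
  simp only [expval, star_smul, mulVec_smul, smul_dotProduct, dotProduct_smul, smul_eq_mul]
  ring

lemma expval_conjTranspose_mul_mul (Q C : Matrix n n ℂ) (ψ : n → ℂ) :
    expval (Qᴴ * C * Q) ψ = expval C (Q *ᵥ ψ) := by
  simp only [expval, star_mulVec, ← mulVec_mulVec, dotProduct_mulVec, vecMul_vecMul]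

lemma expval_one [DecidableEq n] (w : n → ℂ) : expval 1 w = ((∑ x, ‖w x‖ ^ 2 : ℝ) : ℂ) := by
  push_cast
  simp only [expval, one_mulVec, dotProduct, Pi.star_apply, RCLike.star_def]
  exact Finset.sum_congr rfl fun x _ => by rw [mul_comm, Complex.mul_conj']

lemma expval_of_isStarProjection [DecidableEq n] {Q : Matrix n n ℂ} (hQ : IsStarProjection Q)
    (ψ : n → ℂ) : expval Q ψ = ((∑ x, ‖(Q *ᵥ ψ) x‖ ^ 2 : ℝ) : ℂ) := by
  calc expval Q ψ = expval (Qᴴ * 1 * Q) ψ := by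
        rw [Matrix.mul_one, ← star_eq_conjTranspose, hQ.isSelfAdjoint.star_eq,
          hQ.isIdempotentElem.eq]
    _ = _ := by rw [expval_conjTranspose_mul_mul, expval_one]

lemma norm_expval_le [DecidableEq n] (A : Matrix n n ℂ) (v : n → ℂ) :
    ‖expval A v‖ ≤ ‖A‖ * ∑ i, ‖v i‖ ^ 2 := by
  set x : EuclideanSpace ℂ n := WithLp.toLp 2 v
  have hAx : expval A v = inner ℂ x (toEuclideanCLM (𝕜 := ℂ) A x) := by
    rw [toEuclideanCLM_toLp, EuclideanSpace.inner_toLp_toLp, expval, dotProduct_comm]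
  calc ‖expval A v‖ ≤ ‖x‖ * ‖toEuclideanCLM (𝕜 := ℂ) A x‖ := hAx ▸ norm_inner_le_norm _ _
    _ ≤ ‖x‖ * (‖A‖ * ‖x‖) := by gcongr; exact (toEuclideanCLM (𝕜 := ℂ) A).le_opNorm x
    _ = ‖A‖ * ∑ i, ‖v i‖ ^ 2 := by rw [← EuclideanSpace.norm_sq_eq]; ring

end expval

section bipartite

variable {L R : Type*} [Fintype L] [Fintype R] [DecidableEq R]

lemma expval_kronecker_one (A : Matrix L L ℂ) (φ : L × R → ℂ) :
    expval (A ⊗ₖ (1 : Matrix R R ℂ)) φ = ∑ b, expval A (fun a => φ (a, b)) := by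
  simp only [expval, dotProduct, mulVec, kroneckerMap_apply, Fintype.sum_prod_type, one_apply,
    mul_ite, mul_one, mul_zero, ite_mul, zero_mul, Finset.sum_ite_eq, Finset.mem_univ, if_true,
    Pi.star_apply]
  rw [Finset.sum_comm]

lemma norm_expval_kronecker_one_le [DecidableEq L] (A : Matrix L L ℂ) (φ : L × R → ℂ) :
    ‖expval (A ⊗ₖ (1 : Matrix R R ℂ)) φ‖ ≤ ‖A‖ * ∑ x, ‖φ x‖ ^ 2 := by
  rw [expval_kronecker_one, Fintype.sum_prod_type, Finset.sum_comm, Finset.mul_sum]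
  exact (norm_sum_le _ _).trans (Finset.sum_le_sum fun b _ => norm_expval_le A _)

lemma trace_mul_ptraceR_outerM (P : Matrix L L ℂ) (ψ : L × R → ℂ) :
    (P * ptraceR (outerM ψ)).trace = expval (P ⊗ₖ (1 : Matrix R R ℂ)) ψ := by
  rw [expval_kronecker_one]
  simp only [trace, diag, mul_apply, ptraceR, outerM, vecMulVec_apply, of_apply, expval,
    dotProduct, mulVec, Pi.star_apply, Finset.mul_sum]
  conv_rhs => rw [Finset.sum_comm]
  refine Finset.sum_congr rfl fun a _ => ?_
  rw [Finset.sum_comm]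
  exact Finset.sum_congr rfl fun b _ => Finset.sum_congr rfl fun a' _ => by ring

lemma IsStarProjection.kronecker_one {P : Matrix L L ℂ} (hP : IsStarProjection P) :
    IsStarProjection (P ⊗ₖ (1 : Matrix R R ℂ)) where
  isIdempotentElem := by
    rw [IsIdempotentElem, ← mul_kronecker_mul, hP.isIdempotentElem.eq, Matrix.one_mul]
  isSelfAdjoint := by
    rw [IsSelfAdjoint, star_eq_conjTranspose, conjTranspose_kronecker, conjTranspose_one,
      ← star_eq_conjTranspose, hP.isSelfAdjoint.star_eq]

lemma kronecker_one_mul_mul_kronecker_one (P A : Matrix L L ℂ) (B : Matrix R R ℂ) :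
    (P ⊗ₖ (1 : Matrix R R ℂ)) * (A ⊗ₖ B) * (P ⊗ₖ (1 : Matrix R R ℂ)) = (P * A * P) ⊗ₖ B := by
  rw [← mul_kronecker_mul, ← mul_kronecker_mul, Matrix.one_mul, Matrix.mul_one]

lemma connectedCorrelator_truncation [DecidableEq L] {P : Matrix L L ℂ}
    (hP : IsStarProjection P) (ψ : L × R → ℂ) {q : ℝ} (hq : 0 ≤ q)
    (hqs : (q : ℂ) * expval (P ⊗ₖ (1 : Matrix R R ℂ)) ψ * q = q)
    (A : Matrix L L ℂ) (B : Matrix R R ℂ) :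
    connectedCorrelator A B ((Real.sqrt q : ℂ) • ((P ⊗ₖ (1 : Matrix R R ℂ)) *ᵥ ψ)) =
      q * connectedCorrelator (P * A * P) B ψ -
        q ^ 2 * expval ((P * A * P) ⊗ₖ (1 : Matrix R R ℂ)) ψ * connectedCorrelator P B ψ := by
  set Q := P ⊗ₖ (1 : Matrix R R ℂ)
  have hQ : Qᴴ = Q := hP.kronecker_one.isSelfAdjoint.star_eq
  have hν (M : Matrix L L ℂ) (N : Matrix R R ℂ) :
      expval (M ⊗ₖ N) ((Real.sqrt q : ℂ) • (Q *ᵥ ψ)) = q * expval ((P * M * P) ⊗ₖ N) ψ := by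
    rw [expval_smul, ← expval_conjTranspose_mul_mul, hQ, kronecker_one_mul_mul_kronecker_one,
      Complex.star_def, Complex.conj_ofReal, ← Complex.ofReal_mul, Real.mul_self_sqrt hq]
  simp only [connectedCorrelator, hν, Matrix.mul_one, hP.isIdempotentElem.eq]
  linear_combination -(expval ((P * A * P) ⊗ₖ (1 : Matrix R R ℂ)) ψ *
    expval ((1 : Matrix L L ℂ) ⊗ₖ B) ψ) * hqs

/-- `q s q = q` with `s = ⟨ψ|P ⊗ 1|ψ⟩` rather than `q s = 1`: it also holds when `s = 0`, where the
junk value `1 / 0 = 0` gives `q = 0`. -/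
lemma normalization_of_eq_one_div_trace [DecidableEq L] {P : Matrix L L ℂ}
    (hP : IsStarProjection P) (ψ : L × R → ℂ) {q : ℝ}
    (hq : q = 1 / (P * ptraceR (outerM ψ)).trace.re) :
    0 ≤ q ∧ (q : ℂ) * expval (P ⊗ₖ (1 : Matrix R R ℂ)) ψ * q = q := by
  set s := ∑ x, ‖((P ⊗ₖ (1 : Matrix R R ℂ)) *ᵥ ψ) x‖ ^ 2
  have hs : expval (P ⊗ₖ (1 : Matrix R R ℂ)) ψ = s :=
    expval_of_isStarProjection hP.kronecker_one ψ
  rw [trace_mul_ptraceR_outerM, hs, Complex.ofReal_re, one_div] at hq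
  refine ⟨hq ▸ inv_nonneg.2 (Finset.sum_nonneg fun _ _ => sq_nonneg _), ?_⟩
  rw [hs, hq]
  exact_mod_cast (by simpa only [inv_inv] using mul_inv_mul_cancel s⁻¹ : s⁻¹ * s * s⁻¹ = s⁻¹)

end bipartite

theorem correlations_of_projected_state_general
    {L R : Type*} [Fintype L] [Fintype R] [DecidableEq L] [DecidableEq R]
    (ψ : L × R → ℂ) (hψ : (∑ x, ‖ψ x‖ ^ 2) = 1)
    (P : Matrix L L ℂ) (hproj : P * P = P) (hherm : Pᴴ = P)
    (q : ℝ) (hq : q = 1 / ((P * ptraceR (outerM ψ)).trace.re))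
    (ν : L × R → ℂ)
    (hν : ν = fun x => (Real.sqrt q : ℂ) * ((P ⊗ₖ (1 : Matrix R R ℂ)).mulVec ψ) x)
    (c : ℝ)
    (hCor : ∀ (M : Matrix L L ℂ) (N' : Matrix R R ℂ), opNorm M ≤ 1 → opNorm N' ≤ 1 →
      ‖expval (M ⊗ₖ N') ψ -
        expval (M ⊗ₖ (1 : Matrix R R ℂ)) ψ * expval ((1 : Matrix L L ℂ) ⊗ₖ N') ψ‖ ≤ c) :
    ∀ (A : Matrix L L ℂ) (B : Matrix R R ℂ), opNorm A ≤ 1 → opNorm B ≤ 1 →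
      ‖expval (A ⊗ₖ B) ν -
        expval (A ⊗ₖ (1 : Matrix R R ℂ)) ν * expval ((1 : Matrix L L ℂ) ⊗ₖ B) ν‖ ≤
        (q + q ^ 2) * c := by
  intro A B (hA : ‖A‖ ≤ 1) (hB : ‖B‖ ≤ 1)
  have hP : IsStarProjection P := ⟨hproj, hherm⟩
  obtain ⟨hq0, hqs⟩ := normalization_of_eq_one_div_trace hP ψ hq
  have hPAP : ‖P * A * P‖ ≤ 1 := (hP.norm_mul_mul_le A).trans hA
  have hmarg : ‖expval ((P * A * P) ⊗ₖ (1 : Matrix R R ℂ)) ψ‖ ≤ 1 :=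
    (norm_expval_kronecker_one_le (P * A * P) ψ).trans (by rwa [hψ, mul_one])
  change ‖connectedCorrelator A B ν‖ ≤ _
  rw [show ν = (Real.sqrt q : ℂ) • ((P ⊗ₖ (1 : Matrix R R ℂ)) *ᵥ ψ) from hν,
    connectedCorrelator_truncation hP ψ hq0 hqs]
  calc _ ≤ q * ‖connectedCorrelator (P * A * P) B ψ‖ + q ^ 2 *
        (‖expval ((P * A * P) ⊗ₖ (1 : Matrix R R ℂ)) ψ‖ * ‖connectedCorrelator P B ψ‖) := by
        refine (norm_sub_le _ _).trans_eq ?_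
        simp only [norm_mul, norm_pow, Complex.norm_real, Real.norm_of_nonneg hq0, mul_assoc]
    _ ≤ q * c + q ^ 2 * (1 * c) := by
        gcongr
        exacts [hCor _ _ hPAP hB, hCor _ _ hP.norm_le hB]
    _ = (q + q ^ 2) * c := by ring

/-- Truncating a pure bipartite state by a projector `P_L` commuting with its left marginal
increases correlations by at most a factor `q + q²`, where `q = 1/Tr(P_L τ_L)` and
`|ν⟩ = √q P_L |ψ⟩`. -/
theorem correlations_of_projected_state
    {L R : Type*} [Fintype L] [Fintype R] [DecidableEq L] [DecidableEq R]
    (ψ : L × R → ℂ) (hψ : (∑ x, ‖ψ x‖ ^ 2) = 1)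
    (P : Matrix L L ℂ) (hproj : P * P = P) (hherm : Pᴴ = P)
    (hcomm : P * ptraceR (outerM ψ) = ptraceR (outerM ψ) * P)
    (q : ℝ) (hq : q = 1 / ((P * ptraceR (outerM ψ)).trace.re))
    (hqpos : 0 < (P * ptraceR (outerM ψ)).trace.re)
    (ν : L × R → ℂ)
    (hν : ν = fun x => (Real.sqrt q : ℂ) * ((P ⊗ₖ (1 : Matrix R R ℂ)).mulVec ψ) x)
    (c : ℝ)
    (hCor : ∀ (M : Matrix L L ℂ) (N' : Matrix R R ℂ), opNorm M ≤ 1 → opNorm N' ≤ 1 →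
      ‖expval (M ⊗ₖ N') ψ -
        expval (M ⊗ₖ (1 : Matrix R R ℂ)) ψ * expval ((1 : Matrix L L ℂ) ⊗ₖ N') ψ‖ ≤ c) :
    ∀ (A : Matrix L L ℂ) (B : Matrix R R ℂ), opNorm A ≤ 1 → opNorm B ≤ 1 →
      ‖expval (A ⊗ₖ B) ν -
        expval (A ⊗ₖ (1 : Matrix R R ℂ)) ν * expval ((1 : Matrix L L ℂ) ⊗ₖ B) ν‖ ≤
        (q + q ^ 2) * c :=
  correlations_of_projected_state_general ψ hψ P hproj hherm q hq ν hν c hCor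
end

section
/- Let σ_{LR} be a density matrix on L⊗R whose reduced state σ_L has rank at most χ, and suppose Cor(L:R)_σ := max_{‖A‖,‖B‖≤1} Tr((A⊗B)(σ_{LR} − σ_L⊗σ_R)) ≤ δ. Then ‖σ_{LR} − σ_L⊗σ_R‖_1 ≤ χ²·δ. -/
open Matrix
open scoped Kronecker ComplexOrder

/-- Trace norm `‖A‖₁ = Tr √(Aᴴ A)`. -/
noncomputable def traceNorm {n : Type*} [Fintype n] [DecidableEq n]
    (A : Matrix n n ℂ) : ℝ :=
  ((Matrix.posSemidef_conjTranspose_mul_self A).1.eigenvectorUnitary.1 *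
    diagonal (((↑) : ℝ → ℂ) ∘ (√·) ∘ (Matrix.posSemidef_conjTranspose_mul_self A).1.eigenvalues) *
    (star (Matrix.posSemidef_conjTranspose_mul_self A).1.eigenvectorUnitary : Matrix n n ℂ)).trace.re

/-- Partial trace over the first factor `L`. -/
noncomputable def ptraceL {L R : Type*} [Fintype L] [Fintype R]
    (σ : Matrix (L × R) (L × R) ℂ) : Matrix R R ℂ :=
  Matrix.of fun b b' => ∑ a, σ (a, b) (a, b')

/-!
Write `M = σ_{LR} − σ_L ⊗ σ_R`. As `M` is Hermitian, `‖M‖₁ = Re Tr(T M)` for the unitary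
`T = sign M`. Let `(u_a)` be an eigenbasis of `σ_L` and `V_a : z ↦ u_a ⊗ z`. Inserting
`∑_a V_a V_a† = 1` on both sides of `T` writes it as `∑_{a,a'} |u_a⟩⟨u_{a'}| ⊗ V_a† T V_{a'}`, a sum
of products of contractions, each contributing at most `δ` to `Re Tr(T M)`. If `σ_L u_a = 0`, then
`V_a† σ_{LR} V_a` is positive with trace `⟨u_a, σ_L u_a⟩ = 0`, so `M V_a = 0` and every term
involving `a` vanishes: only the at most `χ²` pairs from the support of `σ_L` remain.
-/

lemma Matrix.PosSemidef.mul_eq_zero_of_conjTranspose_mul_mul_eq_zero {m n 𝕜 : Type*} [RCLike 𝕜]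
    [Fintype m] [Fintype n] {A : Matrix m m 𝕜} (hA : A.PosSemidef) {X : Matrix m n 𝕜}
    (h : Xᴴ * A * X = 0) : A * X = 0 := by
  ext i j
  have hcol : star (fun k => X k j) ⬝ᵥ A *ᵥ (fun k => X k j) = 0 := by
    rw [Matrix.mul_assoc] at h
    simpa only [mul_apply, conjTranspose_apply, dotProduct, mulVec, Pi.star_apply, zero_apply]
      using congr_fun (congr_fun h j) j
  simpa [mulVec, dotProduct, mul_apply] using
    congr_fun ((hA.dotProduct_mulVec_zero_iff _).1 hcol) i

section OrthonormalBasis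

variable {ι n 𝕜 : Type*} [RCLike 𝕜] [Fintype ι] [Fintype n]
  (b : OrthonormalBasis ι 𝕜 (EuclideanSpace 𝕜 n))

lemma OrthonormalBasis.star_dotProduct_self (i : ι) : star ⇑(b i) ⬝ᵥ ⇑(b i) = 1 := by
  rw [dotProduct_comm, ← EuclideanSpace.inner_eq_star_dotProduct, b.inner_eq_one]

lemma OrthonormalBasis.sum_vecMulVec_self_star [DecidableEq n] :
    ∑ i, vecMulVec (b i) (star (b i)) = 1 := by
  ext x y
  have := congr_arg (fun v : EuclideanSpace 𝕜 n => v x) (b.sum_repr (EuclideanSpace.single y 1))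
  simpa [vecMulVec_apply, Matrix.sum_apply, OrthonormalBasis.repr_apply_apply,
    EuclideanSpace.inner_single_right, one_apply, mul_comm, eq_comm] using this

end OrthonormalBasis

section Norms

variable {n : Type*} [Fintype n] [DecidableEq n]

section L2OpNorm

open scoped Matrix.Norms.L2Operator

lemma opNorm_eq_l2_opNorm (A : Matrix n n ℂ) : opNorm A = ‖A‖ := rfl

lemma l2_opNorm_le_one_of_conjTranspose_mul_self_eq_one {m : Type*} [Fintype m]
    {V : Matrix m n ℂ} (hV : Vᴴ * V = 1) : ‖V‖ ≤ 1 := by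
  have hone : ‖(1 : Matrix n n ℂ)‖ ≤ 1 := by
    rw [cstar_norm_def, map_one]
    exact ContinuousLinearMap.norm_id_le
  have hVV := l2_opNorm_conjTranspose_mul_self V
  rw [hV] at hVV
  nlinarith [norm_nonneg V]

lemma l2_opNorm_mul_mul_le_one {k l m p : Type*} [Fintype k] [Fintype l] [Fintype m]
    [Fintype p] [DecidableEq l] [DecidableEq m] [DecidableEq p] {A : Matrix k l ℂ}
    {X : Matrix l m ℂ} {B : Matrix m p ℂ} (hA : ‖A‖ ≤ 1) (hX : ‖X‖ ≤ 1) (hB : ‖B‖ ≤ 1) :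
    ‖A * X * B‖ ≤ 1 :=
  calc ‖A * X * B‖ ≤ ‖A‖ * ‖X‖ * ‖B‖ := (l2_opNorm_mul _ _).trans
        (mul_le_mul_of_nonneg_right (l2_opNorm_mul _ _) (norm_nonneg _))
    _ ≤ 1 := mul_le_one₀ (mul_le_one₀ hA (norm_nonneg _) hX) (norm_nonneg _) hB

lemma opNorm_vecMulVec_star_le_one {u w : n → ℂ} (hu : star u ⬝ᵥ u = 1)
    (hw : star w ⬝ᵥ w = 1) : opNorm (vecMulVec u (star w)) ≤ 1 := by
  have hcol {v : n → ℂ} (hv : star v ⬝ᵥ v = 1) : ‖replicateCol Unit v‖ ≤ 1 := by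
    refine l2_opNorm_le_one_of_conjTranspose_mul_self_eq_one ?_
    ext
    simp [conjTranspose_replicateCol, hv]
  have hone : ‖(1 : Matrix Unit Unit ℂ)‖ ≤ 1 :=
    l2_opNorm_le_one_of_conjTranspose_mul_self_eq_one (by simp)
  rw [opNorm_eq_l2_opNorm, vecMulVec_eq Unit, ← conjTranspose_replicateCol,
    ← Matrix.mul_one (replicateCol Unit u)]
  exact l2_opNorm_mul_mul_le_one (hcol hu) hone (by rw [l2_opNorm_conjTranspose]; exact hcol hw)

end L2OpNorm

lemma traceNorm_eq_re_trace_cfc_sqrt (A : Matrix n n ℂ) :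
    traceNorm A = (cfc Real.sqrt (Aᴴ * A)).trace.re := by
  rw [(isHermitian_conjTranspose_mul_self A).cfc_eq]
  rfl

lemma Matrix.IsHermitian.continuousOn_spectrum {M : Matrix n n ℂ} (hM : M.IsHermitian)
    (f : ℝ → ℝ) : ContinuousOn f (spectrum ℝ M) :=
  (hM.spectrum_real_eq_range_eigenvalues ▸ Set.finite_range _ : (spectrum ℝ M).Finite).continuousOn
    f

lemma Matrix.IsHermitian.exists_traceNorm_eq_re_trace_mul {M : Matrix n n ℂ}
    (hM : M.IsHermitian) : ∃ T : Matrix n n ℂ, opNorm T ≤ 1 ∧ traceNorm M = (T * M).trace.re := by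
  have hc := hM.continuousOn_spectrum
  let sign : ℝ → ℝ := fun x => if x < 0 then -1 else 1
  have hsign_sq (x : ℝ) : sign x * sign x = 1 := by by_cases h : x < 0 <;> simp [sign, h]
  have hsqrt_sq (x : ℝ) : √(x ^ 2) = sign x * x := by
    rw [Real.sqrt_sq_eq_abs]
    by_cases h : x < 0
    · simp [sign, h, abs_of_neg h]
    · simp [sign, h, abs_of_nonneg (not_lt.mp h)]
  refine ⟨cfc sign M, l2_opNorm_le_one_of_conjTranspose_mul_self_eq_one ?_, ?_⟩
  · rw [← star_eq_conjTranspose, (cfc_predicate sign M).star_eq,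
      ← cfc_mul sign sign M (hc _) (hc _)]
    simp only [hsign_sq]
    exact cfc_const_one ℝ M
  · rw [traceNorm_eq_re_trace_cfc_sqrt, hM.eq, ← sq, ← cfc_pow_id (R := ℝ) M 2,
      ← cfc_comp' Real.sqrt _ M]
    simp only [hsqrt_sq]
    rw [cfc_mul sign (fun x => x) M (hc _), cfc_id' ℝ M]

end Norms

/-- The matrix of `z ↦ u ⊗ z`, that is `replicateCol u ⊗ₖ 1` without its trivial index. -/
def kronCol {α L : Type*} (R : Type*) [DecidableEq R] [MulZeroOneClass α] (u : L → α) :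
    Matrix (L × R) R α :=
  Matrix.of fun i b => u i.1 * (1 : Matrix R R α) i.2 b

section KronCol

variable {α L R : Type*} [Fintype L] [Fintype R] [DecidableEq R]

section CommSemiring

variable [CommSemiring α]

omit [Fintype L] [Fintype R] in
@[simp]
lemma kronCol_apply (u : L → α) (i : L × R) (b : R) :
    kronCol R u i b = u i.1 * (1 : Matrix R R α) i.2 b := rfl

omit [Fintype L] [Fintype R] in
@[simp]
lemma kronCol_zero : kronCol R (0 : L → α) = 0 := by
  ext; simp

lemma kronecker_mul_kronCol [DecidableEq L] (X : Matrix L L α) (Y : Matrix R R α) (u : L → α) :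
    (X ⊗ₖ Y) * kronCol R u = kronCol R (X *ᵥ u) * Y := by
  ext ⟨x, b⟩ c
  simp [mul_apply, Fintype.sum_prod_type, mulVec, dotProduct, one_apply, Finset.mul_sum,
    mul_comm, mul_left_comm]

variable [StarRing α]

lemma conjTranspose_kronCol_mul_kronCol (u w : L → α) :
    (kronCol R u)ᴴ * kronCol R w = (star u ⬝ᵥ w) • (1 : Matrix R R α) := by
  ext b c
  simp [mul_apply, Fintype.sum_prod_type, dotProduct, one_apply, apply_ite star, eq_comm]

omit [Fintype L] in
lemma kronCol_mul_mul_conjTranspose_kronCol (u w : L → α) (X : Matrix R R α) :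
    kronCol R u * X * (kronCol R w)ᴴ = vecMulVec u (star w) ⊗ₖ X := by
  ext ⟨x, b⟩ ⟨y, c⟩
  simp [mul_apply, one_apply, vecMulVec_apply, apply_ite star]
  ring

end CommSemiring

lemma trace_conjTranspose_kronCol_mul_mul_kronCol (σ : Matrix (L × R) (L × R) ℂ) (u : L → ℂ) :
    ((kronCol R u)ᴴ * σ * kronCol R u).trace = star u ⬝ᵥ (ptraceR σ *ᵥ u) := by
  simp only [trace, diag_apply, mul_apply, Fintype.sum_prod_type, dotProduct, mulVec,
    kronCol_apply, conjTranspose_apply, one_apply, Finset.mul_sum, Finset.sum_mul, apply_ite star,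
    mul_ite, ite_mul, mul_one, mul_zero, zero_mul, star_zero, Finset.sum_ite_eq',
    Finset.mem_univ, if_true, ptraceR, Matrix.of_apply]
  rw [Finset.sum_comm]
  refine (Finset.sum_congr rfl fun _ _ => Finset.sum_comm).trans ?_
  rw [Finset.sum_comm]
  refine Finset.sum_congr rfl fun _ _ => Finset.sum_congr rfl fun _ _ =>
    Finset.sum_congr rfl fun _ _ => ?_
  simp only [Pi.star_apply]
  ring

variable [DecidableEq L]

open scoped Matrix.Norms.L2Operator in
lemma opNorm_conjTranspose_kronCol_mul_mul_kronCol_le_one {u w : L → ℂ}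
    (hu : star u ⬝ᵥ u = 1) (hw : star w ⬝ᵥ w = 1) {T : Matrix (L × R) (L × R) ℂ}
    (hT : opNorm T ≤ 1) : opNorm ((kronCol R u)ᴴ * T * kronCol R w) ≤ 1 := by
  have hV {v : L → ℂ} (hv : star v ⬝ᵥ v = 1) : ‖kronCol R v‖ ≤ 1 :=
    l2_opNorm_le_one_of_conjTranspose_mul_self_eq_one
      (by rw [conjTranspose_kronCol_mul_kronCol, hv, one_smul])
  exact l2_opNorm_mul_mul_le_one (by rw [l2_opNorm_conjTranspose]; exact hV hu) hT (hV hw)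

variable {ι : Type*} [Fintype ι] (b : OrthonormalBasis ι ℂ (EuclideanSpace ℂ L))

lemma OrthonormalBasis.sum_kronCol_mul_conjTranspose_kronCol :
    ∑ i, kronCol R (b i) * (kronCol R (b i))ᴴ = 1 := by
  calc ∑ i, kronCol R (b i) * (kronCol R (b i))ᴴ
      = ∑ i, vecMulVec (b i) (star (b i)) ⊗ₖ (1 : Matrix R R ℂ) := by
        simp_rw [← kronCol_mul_mul_conjTranspose_kronCol, Matrix.mul_one]
    _ = (∑ i, vecMulVec (b i) (star (b i))) ⊗ₖ (1 : Matrix R R ℂ) := by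
        ext; simp [Matrix.sum_apply, Finset.sum_mul]
    _ = 1 := by rw [b.sum_vecMulVec_self_star, one_kronecker_one]

lemma OrthonormalBasis.eq_sum_kronecker (T : Matrix (L × R) (L × R) ℂ) :
    T = ∑ i, ∑ j, vecMulVec (b i) (star (b j)) ⊗ₖ ((kronCol R (b i))ᴴ * T * kronCol R (b j)) := by
  simp_rw [← kronCol_mul_mul_conjTranspose_kronCol]
  calc T = (∑ i, kronCol R (b i) * (kronCol R (b i))ᴴ) * T
        * ∑ j, kronCol R (b j) * (kronCol R (b j))ᴴ := by
        rw [b.sum_kronCol_mul_conjTranspose_kronCol, Matrix.one_mul, Matrix.mul_one]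
    _ = _ := by
        simp only [Finset.sum_mul, Finset.mul_sum, Matrix.mul_assoc]
        exact Finset.sum_comm

lemma OrthonormalBasis.re_trace_mul_le_card_sq_mul (s : Finset ι)
    {M : Matrix (L × R) (L × R) ℂ} (hM : M.IsHermitian) (hsupp : ∀ i ∉ s, M * kronCol R (b i) = 0)
    {δ : ℝ} (hCor : ∀ (A : Matrix L L ℂ) (B : Matrix R R ℂ), opNorm A ≤ 1 → opNorm B ≤ 1 →
      (((A ⊗ₖ B) * M).trace).re ≤ δ)
    {T : Matrix (L × R) (L × R) ℂ} (hT : opNorm T ≤ 1) :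
    ((T * M).trace).re ≤ s.card ^ 2 * δ := by
  classical
  set B : ι → ι → Matrix R R ℂ := fun i j => (kronCol R (b i))ᴴ * T * kronCol R (b j)
  have hterm (i j : ι) : (((vecMulVec (b i) (star (b j)) ⊗ₖ B i j) * M).trace).re
      ≤ if i ∈ s ∧ j ∈ s then δ else 0 := by
    split_ifs with hij
    · exact hCor _ _ (opNorm_vecMulVec_star_le_one (b.star_dotProduct_self i)
        (b.star_dotProduct_self j)) (opNorm_conjTranspose_kronCol_mul_mul_kronCol_le_one
        (b.star_dotProduct_self i) (b.star_dotProduct_self j) hT)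
    · rw [← kronCol_mul_mul_conjTranspose_kronCol]
      rcases not_and_or.mp hij with hi | hj
      · rw [trace_mul_comm, ← Matrix.mul_assoc, ← Matrix.mul_assoc, hsupp i hi]
        simp
      · rw [Matrix.mul_assoc, ← hM.eq, ← conjTranspose_mul, hsupp j hj]
        simp
  calc ((T * M).trace).re
      = ∑ i, ∑ j, (((vecMulVec (b i) (star (b j)) ⊗ₖ B i j) * M).trace).re := by
        conv_lhs => rw [b.eq_sum_kronecker (R := R) T]
        simp only [Finset.sum_mul, trace_sum, Complex.re_sum, B]
    _ ≤ ∑ i, ∑ j, if i ∈ s ∧ j ∈ s then δ else 0 :=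
        Finset.sum_le_sum fun i _ => Finset.sum_le_sum fun j _ => hterm i j
    _ = s.card ^ 2 * δ := by
        simp [ite_and, Finset.sum_ite_mem, sq, mul_assoc]

end KronCol

section PartialTrace

variable {L R : Type*} [Fintype L] [Fintype R] {σ : Matrix (L × R) (L × R) ℂ}

lemma isHermitian_ptraceR (hσ : σ.IsHermitian) : (ptraceR σ).IsHermitian := by
  ext a a'
  simp only [conjTranspose_apply, ptraceR, of_apply, star_sum]
  exact Finset.sum_congr rfl fun b _ => hσ.apply _ _

lemma isHermitian_ptraceL (hσ : σ.IsHermitian) : (ptraceL σ).IsHermitian := by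
  ext b b'
  simp only [conjTranspose_apply, ptraceL, of_apply, star_sum]
  exact Finset.sum_congr rfl fun a _ => hσ.apply _ _

lemma Matrix.PosSemidef.mul_kronCol_eq_zero [DecidableEq R] (hσ : σ.PosSemidef) {u : L → ℂ}
    (hu : ptraceR σ *ᵥ u = 0) : σ * kronCol R u = 0 := by
  refine hσ.mul_eq_zero_of_conjTranspose_mul_mul_eq_zero ?_
  refine (hσ.conjTranspose_mul_mul_same (kronCol R u)).trace_eq_zero_iff.mp ?_
  rw [trace_conjTranspose_kronCol_mul_mul_kronCol, hu, dotProduct_zero]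

lemma Matrix.PosSemidef.sub_kronecker_mul_kronCol_eq_zero [DecidableEq L] [DecidableEq R]
    (hσ : σ.PosSemidef) {u : L → ℂ} (hu : ptraceR σ *ᵥ u = 0) :
    (σ - ptraceR σ ⊗ₖ ptraceL σ) * kronCol R u = 0 := by
  rw [Matrix.sub_mul, hσ.mul_kronCol_eq_zero hu, kronecker_mul_kronCol, hu, kronCol_zero,
    Matrix.zero_mul, sub_zero]

end PartialTrace

theorem traceNorm_le_of_rank_and_correlations_general
    {L R : Type*} [Fintype L] [Fintype R] [DecidableEq L] [DecidableEq R]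
    (σ : Matrix (L × R) (L × R) ℂ) (hσ : σ.PosSemidef)
    (χ : ℕ) (hrank : (ptraceR σ).rank ≤ χ) (δ : ℝ)
    (hCor : ∀ (A : Matrix L L ℂ) (B : Matrix R R ℂ), opNorm A ≤ 1 → opNorm B ≤ 1 →
      (((A ⊗ₖ B) * (σ - ptraceR σ ⊗ₖ ptraceL σ)).trace).re ≤ δ) :
    traceNorm (σ - ptraceR σ ⊗ₖ ptraceL σ) ≤ (χ : ℝ) ^ 2 * δ := by
  have hσL := isHermitian_ptraceR hσ.isHermitian
  have hM : (σ - ptraceR σ ⊗ₖ ptraceL σ).IsHermitian := hσ.isHermitian.sub <| by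
    rw [IsHermitian, conjTranspose_kronecker, hσL.eq, (isHermitian_ptraceL hσ.isHermitian).eq]
  have hδ : 0 ≤ δ := by
    simpa [opNorm] using hCor 0 0 (by simp [opNorm]) (by simp [opNorm])
  let s := Finset.univ.filter fun i => hσL.eigenvalues i ≠ 0
  have hs : s.card ≤ χ := by
    rwa [hσL.rank_eq_card_non_zero_eigs, Fintype.card_subtype] at hrank
  have hsupp (i) (hi : i ∉ s) :
      (σ - ptraceR σ ⊗ₖ ptraceL σ) * kronCol R (hσL.eigenvectorBasis i) = 0 := by
    refine hσ.sub_kronecker_mul_kronCol_eq_zero ?_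
    have hzero : hσL.eigenvalues i = 0 := by simpa [s] using hi
    rw [hσL.mulVec_eigenvectorBasis, hzero, zero_smul]
  obtain ⟨T, hT, hTM⟩ := hM.exists_traceNorm_eq_re_trace_mul
  calc traceNorm (σ - ptraceR σ ⊗ₖ ptraceL σ)
      = ((T * (σ - ptraceR σ ⊗ₖ ptraceL σ)).trace).re := hTM
    _ ≤ s.card ^ 2 * δ := hσL.eigenvectorBasis.re_trace_mul_le_card_sq_mul s hM hsupp hCor hT
    _ ≤ χ ^ 2 * δ := by gcongr

/-- If `σ_L` has rank at most `χ` and all normalized product correlations of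
`σ_{LR} − σ_L ⊗ σ_R` are at most `δ`, then `‖σ_{LR} − σ_L ⊗ σ_R‖₁ ≤ χ²δ`. -/
theorem traceNorm_le_of_rank_and_correlations
    {L R : Type*} [Fintype L] [Fintype R] [DecidableEq L] [DecidableEq R]
    (σ : Matrix (L × R) (L × R) ℂ) (hσ : σ.PosSemidef) (htr : σ.trace = 1)
    (χ : ℕ) (hrank : (ptraceR σ).rank ≤ χ) (δ : ℝ)
    (hCor : ∀ (A : Matrix L L ℂ) (B : Matrix R R ℂ), opNorm A ≤ 1 → opNorm B ≤ 1 →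
      (((A ⊗ₖ B) * (σ - ptraceR σ ⊗ₖ ptraceL σ)).trace).re ≤ δ) :
    traceNorm (σ - ptraceR σ ⊗ₖ ptraceL σ) ≤ (χ : ℝ) ^ 2 * δ :=
  traceNorm_le_of_rank_and_correlations_general σ hσ χ hrank δ hCor
end
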